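/- arXiv:2009.00195 — 3 statements merged into one kernel-verified Lean document; each statement's English description precedes it below -/
import Mathlib

section
/- The critical height of V_ε is bounded above by c_*/ε + C_{δ₁,U}, where c_* is the clipped critical height of U at level c with tolerance δ₁, and C_{δ₁,U} = sup_{x ∈ B(0,R)} (1/f(δ₁))(U(x) − U(x)∧(c+δ₁)) is a constant independent of ε, provided the critical height of V_ε is attained over a ball B(0,R) of sufficiently large radius R. -/
open Real MeasureTheory Set

/-- `C¹` parametric curves from `x` to `y` (parametrized over `[0,1]`). -/
def Curves {E : Type*} [NormedAddCommGroup E] [NormedSpace ℝ E] (x y : E) :=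
  {γ : ℝ → E // ContDiff ℝ 1 γ ∧ γ 0 = x ∧ γ 1 = y}

/-- Critical height of `W`, with the endpoints `x, y` restricted to a set `S`:
`sup_{x,y ∈ S} inf_{γ ∈ Γ_{x,y}} { sup_t W(γ(t)) − W(x) − W(y) + inf W }`. -/
noncomputable def critHeightOn {E : Type*} [NormedAddCommGroup E] [NormedSpace ℝ E]
    (S : Set E) (W : E → ℝ) : ℝ :=
  ⨆ x : S, ⨆ y : S, ⨅ γ : Curves (x : E) (y : E),
    ((⨆ t : Icc (0 : ℝ) 1, W (γ.1 t)) - W x - W y + sInf (Set.range W))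

/-- Critical height `E_*(W)` of a function `W`. -/
noncomputable def critHeight {E : Type*} [NormedAddCommGroup E] [NormedSpace ℝ E]
    (W : E → ℝ) : ℝ :=
  critHeightOn Set.univ W

/-- The clipped critical height `c_* = c_*(U, c, δ₁)`:
`sup_{x,y} inf_γ { sup_t (U(γ(t)) ∧ (c+δ₁)) − U(x)∧c − U(y)∧c + inf U }`. -/
noncomputable def clippedHeight {E : Type*} [NormedAddCommGroup E] [NormedSpace ℝ E]
    (U : E → ℝ) (c δ₁ : ℝ) : ℝ :=
  ⨆ x : E, ⨆ y : E, ⨅ γ : Curves x y,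
    ((⨆ t : Icc (0 : ℝ) 1, min (U (γ.1 t)) (c + δ₁)) - min (U x) c - min (U y) c
      + sInf (Set.range U))

/-- The potential `V_ε(x) = ∫_{U_min}^{U(x)} du/(f((u−c)₊)+ε)`. -/
noncomputable def Veps {d : ℕ} (U : EuclideanSpace ℝ (Fin d) → ℝ) (f : ℝ → ℝ)
    (Umin c ε : ℝ) (x : EuclideanSpace ℝ (Fin d)) : ℝ :=
  ∫ u in Umin..U x, (f (max (u - c) 0) + ε)⁻¹

/-- The straight segment from `x` to `y`, as an element of `Curves x y`. -/
noncomputable def segCurve {E : Type*} [NormedAddCommGroup E] [NormedSpace ℝ E] (x y : E) :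
    Curves x y :=
  ⟨fun t => x + t • (y - x),
    contDiff_const.add (contDiff_id.smul contDiff_const),
    by simp, by simp⟩

instance {E : Type*} [NormedAddCommGroup E] [NormedSpace ℝ E] (x y : E) :
    Nonempty (Curves x y) := ⟨segCurve x y⟩

/-- Any continuous function attains its maximum along a curve restricted to `[0,1]`,
and the supremum equals that maximum value. -/
lemma csSup_curve {E : Type*} [NormedAddCommGroup E] [NormedSpace ℝ E]
    {U : E → ℝ} (hU : Continuous U) {x y : E} (γ : Curves x y) :
    ∃ t : Icc (0 : ℝ) 1, (⨆ s : Icc (0 : ℝ) 1, U (γ.1 s)) = U (γ.1 t)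
      ∧ ∀ s : Icc (0 : ℝ) 1, U (γ.1 s) ≤ U (γ.1 t) := by
  obtain ⟨t, ht, hmax⟩ := isCompact_Icc.exists_isMaxOn (Set.nonempty_Icc.2 zero_le_one)
    ((hU.comp γ.2.1.continuous).continuousOn)
  set t' : Icc (0 : ℝ) 1 := ⟨t, ht⟩ with ht'
  have hmax' : ∀ s : Icc (0 : ℝ) 1, U (γ.1 s) ≤ U (γ.1 t') := fun s => hmax s.2
  have hbd : BddAbove (Set.range fun s : Icc (0 : ℝ) 1 => U (γ.1 s)) := by
    refine ⟨U (γ.1 t'), ?_⟩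
    rintro _ ⟨s, rfl⟩
    exact hmax' s
  exact ⟨t', le_antisymm (ciSup_le hmax') (le_ciSup hbd t'), hmax'⟩

/-- `Veps` is a monotone function of the value of `U`. -/
lemma veps_mono {d : ℕ} (U : EuclideanSpace ℝ (Fin d) → ℝ) (f : ℝ → ℝ)
    (Umin c ε : ℝ) (hfnn : ∀ s, 0 ≤ f s) (hfmono : Monotone f) (hε : 0 < ε)
    {z w : EuclideanSpace ℝ (Fin d)} (hzw : U z ≤ U w) :
    Veps U f Umin c ε z ≤ Veps U f Umin c ε w := by
  have hanti : Antitone fun u => (f (max (u - c) 0) + ε)⁻¹ := by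
    intro u v huv
    have h1 : f (max (u - c) 0) + ε ≤ f (max (v - c) 0) + ε := by
      have := hfmono (max_le_max (sub_le_sub_right huv c) (le_refl (0:ℝ)))
      linarith
    exact inv_anti₀ (by have := hfnn (max (u - c) 0); linarith) h1
  have hint : ∀ a b : ℝ, IntervalIntegrable (fun u => (f (max (u - c) 0) + ε)⁻¹) volume a b :=
    fun a b => hanti.intervalIntegrable
  have hadd := intervalIntegral.integral_add_adjacent_intervals
    (hint Umin (U z)) (hint (U z) (U w))
  have hnn : 0 ≤ ∫ u in (U z)..(U w), (f (max (u - c) 0) + ε)⁻¹ :=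
    intervalIntegral.integral_nonneg hzw (fun u _ => by
      have := hfnn (max (u - c) 0)
      positivity)
  unfold Veps
  linarith [hadd, hnn]

set_option maxHeartbeats 1000000 in
/-- The critical height of `V_ε` is bounded by `c_*/ε + C_{δ₁,U}`, where
`C_{δ₁,U} = sup_{x ∈ B(0,R)} (1/f(δ₁))(U(x) − U(x)∧(c+δ₁))` is independent of `ε`,
provided the critical height of `V_ε` is attained over the ball `B(0,R)`. -/
theorem stmt4 {d : ℕ} (U : EuclideanSpace ℝ (Fin d) → ℝ) (f : ℝ → ℝ)
    (Umin c ε δ₁ R : ℝ)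
    (hUcont : Continuous U)
    (hUmin : IsGLB (Set.range U) Umin)
    (hfnn : ∀ s, 0 ≤ f s) (hfmono : Monotone f)
    (hδ₁ : 0 < δ₁) (hfδ₁ : 0 < f δ₁)
    (hc : Umin < c) (hε : 0 < ε) (hR : 0 < R)
    (hsandwich : ∀ x,
      (1 / ε) * (min (U x) c - Umin) ≤ Veps U f Umin c ε x ∧
      Veps U f Umin c ε x ≤ (1 / ε) * (min (U x) (c + δ₁) - Umin)
        + (1 / f δ₁) * (U x - min (U x) (c + δ₁)))
    (hball : critHeight (Veps U f Umin c ε)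
      = critHeightOn (Metric.closedBall (0 : EuclideanSpace ℝ (Fin d)) R)
          (Veps U f Umin c ε)) :
    critHeight (Veps U f Umin c ε) ≤ clippedHeight U c δ₁ / ε
      + ⨆ x : Metric.closedBall (0 : EuclideanSpace ℝ (Fin d)) R,
          (1 / f δ₁) * (U x - min (U x) (c + δ₁)) := by
  set V : EuclideanSpace ℝ (Fin d) → ℝ := Veps U f Umin c ε with hVdef
  set K : ℝ := c + δ₁ with hKdef
  set C : ℝ := ⨆ x : Metric.closedBall (0 : EuclideanSpace ℝ (Fin d)) R,
    (1 / f δ₁) * (U x - min (U x) K) with hCdef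
  have hUge : ∀ z, Umin ≤ U z := fun z => hUmin.1 ⟨z, rfl⟩
  have hKge : Umin ≤ K := by rw [hKdef]; linarith
  have hKc : c ≤ K := by rw [hKdef]; linarith
  have hεinv : (0:ℝ) < 1 / ε := by positivity
  have hfinv : (0:ℝ) < 1 / f δ₁ := by positivity
  -- V is nonnegative
  have hVnn : ∀ z, 0 ≤ V z := fun z => by
    have h1 := (hsandwich z).1
    have h2 : Umin ≤ min (U z) c := le_min (hUge z) hc.le
    have h3 := mul_nonneg hεinv.le (sub_nonneg.2 h2)
    linarith
  have hVbdd : BddBelow (Set.range V) := ⟨0, by rintro _ ⟨z, rfl⟩; exact hVnn z⟩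
  -- infimum of V is ≤ 0
  have hI0 : sInf (Set.range V) ≤ 0 := by
    refine le_of_forall_pos_le_add fun η hη => ?_
    have hβ : Umin < min c (Umin + ε * η) := lt_min hc (by nlinarith)
    have hz : ∃ z, U z < min c (Umin + ε * η) := by
      by_contra hcon
      push_neg at hcon
      have : min c (Umin + ε * η) ≤ Umin := hUmin.2 (by rintro _ ⟨z, rfl⟩; exact hcon z)
      linarith
    obtain ⟨z, hz⟩ := hz
    have hz1 : U z < c := hz.trans_le (min_le_left _ _)
    have hz2 : U z < Umin + ε * η := hz.trans_le (min_le_right _ _)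
    have h2 := (hsandwich z).2
    have hmin : min (U z) K = U z := min_eq_left (by rw [hKdef]; linarith)
    rw [hmin] at h2
    have h3 : (1 / ε) * (U z - Umin) ≤ (1 / ε) * (ε * η) :=
      mul_le_mul_of_nonneg_left (by linarith) hεinv.le
    have h4 : (1 / ε) * (ε * η) = η := by field_simp
    have h5 : V z ≤ η := by
      have h6 : (1 / f δ₁) * (U z - U z) = 0 := by ring
      linarith
    exact le_trans (csInf_le hVbdd ⟨z, rfl⟩) (by linarith)
  -- reduce to endpoints in the ball
  rw [hball]
  have hBne : (Metric.closedBall (0 : EuclideanSpace ℝ (Fin d)) R).Nonempty :=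
    ⟨0, Metric.mem_closedBall_self hR.le⟩
  haveI := hBne.to_subtype
  rw [critHeightOn]
  refine ciSup_le fun x => ciSup_le fun y => ?_
  -- basic bddAbove facts for clipped sups
  have hclipBddA : ∀ (x' y' : EuclideanSpace ℝ (Fin d)) (γ : Curves x' y'),
      BddAbove (Set.range fun t : Icc (0:ℝ) 1 => min (U (γ.1 t)) K) := by
    intro x' y' γ
    refine ⟨K, ?_⟩
    rintro _ ⟨s, rfl⟩
    exact min_le_right _ _
  -- the clip-sup of any curve is ≥ min (U x') K
  have hclipSup_ge : ∀ (x' y' : EuclideanSpace ℝ (Fin d)) (γ : Curves x' y'),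
      min (U x') K ≤ ⨆ t : Icc (0:ℝ) 1, min (U (γ.1 t)) K := by
    intro x' y' γ
    have h0 : min (U (γ.1 0)) K ≤ ⨆ t : Icc (0:ℝ) 1, min (U (γ.1 t)) K :=
      le_ciSup (hclipBddA x' y' γ) ⟨0, Set.mem_Icc.2 ⟨le_rfl, zero_le_one⟩⟩
    rwa [γ.2.2.1] at h0
  -- bddBelow of the inner clippedHeight families
  have hclipInf_bddB : ∀ (x' y' : EuclideanSpace ℝ (Fin d)),
      BddBelow (Set.range fun γ : Curves x' y' =>
      ((⨆ t : Icc (0:ℝ) 1, min (U (γ.1 t)) K) - min (U x') c - min (U y') c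
        + sInf (Set.range U))) := by
    intro x' y'
    refine ⟨min (U x') K - min (U x') c - min (U y') c + sInf (Set.range U), ?_⟩
    rintro _ ⟨γ, rfl⟩
    have := hclipSup_ge x' y' γ
    dsimp only
    linarith
  have hmingec : ∀ z, Umin ≤ min (U z) c := fun z => le_min (hUge z) hc.le
  have hsInfU : sInf (Set.range U) = Umin := hUmin.csInf_eq (Set.range_nonempty U)
  -- each inner infimum in clippedHeight is at most K - Umin
  have hIle : ∀ x' y' : EuclideanSpace ℝ (Fin d), (⨅ γ : Curves x' y',
      ((⨆ t : Icc (0:ℝ) 1, min (U (γ.1 t)) K) - min (U x') c - min (U y') c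
        + sInf (Set.range U))) ≤ K - Umin := by
    intro x' y'
    refine le_trans (ciInf_le (hclipInf_bddB x' y') (segCurve x' y')) ?_
    have h1 : (⨆ t : Icc (0:ℝ) 1, min (U ((segCurve x' y').1 t)) K) ≤ K :=
      ciSup_le fun t => min_le_right _ _
    have h2 := hmingec x'
    have h3 := hmingec y'
    rw [hsInfU]
    linarith
  -- Now the main pointwise bound
  refine le_of_forall_pos_le_add fun η hη => ?_
  set δ : ℝ := η / (1 / ε + 1 / f δ₁) with hδdef
  have hδpos : 0 < δ := div_pos hη (by positivity)
  have hδη : δ * (1 / ε) + δ * (1 / f δ₁) = η := by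
    rw [hδdef]
    field_simp
  -- the infimum over curves of the max of U
  set Ma : ℝ := ⨅ γ : Curves (x : EuclideanSpace ℝ (Fin d)) (y : EuclideanSpace ℝ (Fin d)),
    ⨆ t : Icc (0:ℝ) 1, U (γ.1 t) with hMadef
  have hMbdd : BddBelow (Set.range
      fun γ : Curves (x : EuclideanSpace ℝ (Fin d)) (y : EuclideanSpace ℝ (Fin d)) =>
      ⨆ t : Icc (0:ℝ) 1, U (γ.1 t)) := by
    refine ⟨U (x : EuclideanSpace ℝ (Fin d)), ?_⟩
    rintro _ ⟨γ, rfl⟩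
    obtain ⟨t', heq, hmax⟩ := csSup_curve hUcont γ
    have h0 : U (γ.1 0) ≤ U (γ.1 t') := hmax ⟨0, Set.mem_Icc.2 ⟨le_rfl, zero_le_one⟩⟩
    rw [γ.2.2.1] at h0
    dsimp only
    rw [heq]
    exact h0
  -- a near-minimizing curve γ for Ma
  obtain ⟨γ, hγ⟩ : ∃ γ : Curves (x : EuclideanSpace ℝ (Fin d)) (y : EuclideanSpace ℝ (Fin d)),
      (⨆ t : Icc (0:ℝ) 1, U (γ.1 t)) < Ma + δ :=
    exists_lt_of_ciInf_lt (lt_add_of_pos_right Ma hδpos)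
  obtain ⟨tδ, htδeq, htδmax⟩ := csSup_curve hUcont γ
  have hMδ : U (γ.1 tδ) < Ma + δ := by rw [← htδeq]; exact hγ
  -- the segment between x and y, staying in the ball
  set σ : Curves (x : EuclideanSpace ℝ (Fin d)) (y : EuclideanSpace ℝ (Fin d)) :=
    segCurve (x : EuclideanSpace ℝ (Fin d)) (y : EuclideanSpace ℝ (Fin d)) with hσdef
  obtain ⟨t₀, ht₀eq, ht₀max⟩ := csSup_curve hUcont σ
  have hwB : σ.1 t₀ ∈ Metric.closedBall (0 : EuclideanSpace ℝ (Fin d)) R := by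
    have hxB := x.2
    have hyB := y.2
    have hconv := convex_closedBall (0 : EuclideanSpace ℝ (Fin d)) R
    have ht1 : (0:ℝ) ≤ 1 - (t₀ : ℝ) := by have := t₀.2.2; linarith
    have ht2 : (0:ℝ) ≤ (t₀ : ℝ) := t₀.2.1
    have hmem := hconv hxB hyB ht1 ht2 (by ring)
    have heq2 : (1 - (t₀:ℝ)) • (x : EuclideanSpace ℝ (Fin d)) + (t₀:ℝ) • (y : EuclideanSpace ℝ (Fin d))
        = (x : EuclideanSpace ℝ (Fin d)) + (t₀:ℝ) • ((y : EuclideanSpace ℝ (Fin d)) - (x : EuclideanSpace ℝ (Fin d))) := by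
      module
    rw [heq2] at hmem
    exact hmem
  have haw : Ma ≤ U (σ.1 t₀) := by
    have h1 : Ma ≤ ⨆ t : Icc (0:ℝ) 1, U (σ.1 t) := ciInf_le hMbdd σ
    rwa [ht₀eq] at h1
  have hMw : U (γ.1 tδ) < U (σ.1 t₀) + δ := lt_of_lt_of_le hMδ (by linarith)
  -- bddAbove for sups of V along curves
  have hVsupBddA : ∀ (x' y' : EuclideanSpace ℝ (Fin d)) (γ' : Curves x' y'),
      BddAbove (Set.range fun t : Icc (0:ℝ) 1 => V (γ'.1 t)) := by
    intro x' y' γ'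
    obtain ⟨t', -, hmax⟩ := csSup_curve hUcont γ'
    refine ⟨V (γ'.1 t'), ?_⟩
    rintro _ ⟨s, rfl⟩
    exact veps_mono U f Umin c ε hfnn hfmono hε (hmax s)
  -- Step A: bound the infimum by the value at γ
  have hVinf_bddB : BddBelow (Set.range
      fun γ' : Curves (x : EuclideanSpace ℝ (Fin d)) (y : EuclideanSpace ℝ (Fin d)) =>
      ((⨆ t : Icc (0:ℝ) 1, V (γ'.1 t)) - V x - V y + sInf (Set.range V))) := by
    refine ⟨V (x : EuclideanSpace ℝ (Fin d)) - V x - V y + sInf (Set.range V), ?_⟩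
    rintro _ ⟨γ', rfl⟩
    have h0 : V (γ'.1 0) ≤ ⨆ t : Icc (0:ℝ) 1, V (γ'.1 t) :=
      le_ciSup (hVsupBddA _ _ γ') ⟨0, Set.mem_Icc.2 ⟨le_rfl, zero_le_one⟩⟩
    rw [γ'.2.2.1] at h0
    dsimp only
    linarith
  have stepA : (⨅ γ' : Curves (x : EuclideanSpace ℝ (Fin d)) (y : EuclideanSpace ℝ (Fin d)),
      ((⨆ t : Icc (0:ℝ) 1, V (γ'.1 t)) - V x - V y + sInf (Set.range V)))
      ≤ (⨆ t : Icc (0:ℝ) 1, V (γ.1 t)) - V x - V y + sInf (Set.range V) :=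
    ciInf_le hVinf_bddB γ
  -- Step B: sup of V along γ is at most V at the max point of U
  have stepB : (⨆ t : Icc (0:ℝ) 1, V (γ.1 t)) ≤ V (γ.1 tδ) :=
    ciSup_le fun s => veps_mono U f Umin c ε hfnn hfmono hε (htδmax s)
  -- Step C: sandwich at the max point
  have stepC : V (γ.1 tδ) ≤ (1 / ε) * (min (U (γ.1 tδ)) K - Umin)
      + (1 / f δ₁) * (U (γ.1 tδ) - min (U (γ.1 tδ)) K) :=
    (hsandwich (γ.1 tδ)).2
  -- Step D: lower bounds at the endpoints
  have stepDx : (1 / ε) * (min (U (x : EuclideanSpace ℝ (Fin d))) c - Umin) ≤ V x :=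
    (hsandwich (x : EuclideanSpace ℝ (Fin d))).1
  have stepDy : (1 / ε) * (min (U (y : EuclideanSpace ℝ (Fin d))) c - Umin) ≤ V y :=
    (hsandwich (y : EuclideanSpace ℝ (Fin d))).1
  -- Step E: min M K ≤ min Ma K + δ
  have stepE : min (U (γ.1 tδ)) K ≤ min Ma K + δ := by
    rcases le_total Ma K with h | h
    · rw [min_eq_left h]; exact (min_le_left _ _).trans (by linarith)
    · rw [min_eq_right h]; exact (min_le_right _ _).trans (by linarith)
  -- Step F: min Ma K ≤ bclip
  set bclip : ℝ := ⨅ γ' : Curves (x : EuclideanSpace ℝ (Fin d)) (y : EuclideanSpace ℝ (Fin d)),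
    ⨆ t : Icc (0:ℝ) 1, min (U (γ'.1 t)) K with hbclipdef
  have stepF : min Ma K ≤ bclip := by
    refine le_ciInf fun γ' => ?_
    obtain ⟨t', heq, hmax⟩ := csSup_curve hUcont γ'
    have h1 : Ma ≤ U (γ'.1 t') := by
      have h2 : Ma ≤ ⨆ t : Icc (0:ℝ) 1, U (γ'.1 t) := ciInf_le hMbdd γ'
      rwa [heq] at h2
    calc min Ma K ≤ min (U (γ'.1 t')) K := min_le_min h1 le_rfl
      _ ≤ ⨆ t : Icc (0:ℝ) 1, min (U (γ'.1 t)) K := le_ciSup (hclipBddA _ _ γ') t'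
  -- Step G: excess bound
  have stepG : U (γ.1 tδ) - min (U (γ.1 tδ)) K
      ≤ (U (σ.1 t₀) - min (U (σ.1 t₀)) K) + δ := by
    rcases le_total (U (γ.1 tδ)) K with h | h
    · rw [min_eq_left h]
      have : min (U (σ.1 t₀)) K ≤ U (σ.1 t₀) := min_le_left _ _
      linarith
    · rw [min_eq_right h]
      rcases le_total (U (σ.1 t₀)) K with h' | h'
      · rw [min_eq_left h']; linarith
      · rw [min_eq_right h']; linarith
  -- Step H: sup over ball bound for the excess
  have hCcont : Continuous fun z : EuclideanSpace ℝ (Fin d) =>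
      (1 / f δ₁) * (U z - min (U z) K) :=
    (continuous_const.mul (hUcont.sub (hUcont.min continuous_const)))
  have hCbdd : BddAbove (Set.range
      fun z : Metric.closedBall (0 : EuclideanSpace ℝ (Fin d)) R =>
      (1 / f δ₁) * (U z - min (U z) K)) := by
    have := (isCompact_closedBall (0 : EuclideanSpace ℝ (Fin d)) R).bddAbove_image
      hCcont.continuousOn
    rwa [Set.image_eq_range] at this
  have stepH : (1 / f δ₁) * (U (σ.1 t₀) - min (U (σ.1 t₀)) K) ≤ C :=
    le_ciSup hCbdd (⟨σ.1 t₀, hwB⟩ : Metric.closedBall (0 : EuclideanSpace ℝ (Fin d)) R)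
  -- Step I: bclip - mx - my + Umin ≤ clippedHeight
  have stepI : bclip - min (U (x : EuclideanSpace ℝ (Fin d))) c
      - min (U (y : EuclideanSpace ℝ (Fin d))) c + Umin ≤ clippedHeight U c δ₁ := by
    rw [clippedHeight, ← hKdef]
    have h1 : bclip - min (U (x : EuclideanSpace ℝ (Fin d))) c
        - min (U (y : EuclideanSpace ℝ (Fin d))) c + Umin
        ≤ ⨅ γ' : Curves (x : EuclideanSpace ℝ (Fin d)) (y : EuclideanSpace ℝ (Fin d)),
          ((⨆ t : Icc (0:ℝ) 1, min (U (γ'.1 t)) K)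
            - min (U (x : EuclideanSpace ℝ (Fin d))) c
            - min (U (y : EuclideanSpace ℝ (Fin d))) c + sInf (Set.range U)) := by
      refine le_ciInf fun γ' => ?_
      have h2 : bclip ≤ ⨆ t : Icc (0:ℝ) 1, min (U (γ'.1 t)) K := by
        refine ciInf_le ⟨min (U (x : EuclideanSpace ℝ (Fin d))) K, ?_⟩ γ'
        rintro _ ⟨γ'', rfl⟩
        exact hclipSup_ge _ _ γ''
      rw [hsInfU]
      linarith
    refine h1.trans ?_
    have hys : (⨅ γ' : Curves (x : EuclideanSpace ℝ (Fin d)) (y : EuclideanSpace ℝ (Fin d)),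
        ((⨆ t : Icc (0:ℝ) 1, min (U (γ'.1 t)) K)
          - min (U (x : EuclideanSpace ℝ (Fin d))) c
          - min (U (y : EuclideanSpace ℝ (Fin d))) c + sInf (Set.range U)))
        ≤ ⨆ y' : EuclideanSpace ℝ (Fin d),
          ⨅ γ' : Curves (x : EuclideanSpace ℝ (Fin d)) y',
          ((⨆ t : Icc (0:ℝ) 1, min (U (γ'.1 t)) K)
            - min (U (x : EuclideanSpace ℝ (Fin d))) c - min (U y') c
            + sInf (Set.range U)) := by
      refine le_ciSup (f := fun y' : EuclideanSpace ℝ (Fin d) =>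
        ⨅ γ' : Curves (x : EuclideanSpace ℝ (Fin d)) y',
          ((⨆ t : Icc (0:ℝ) 1, min (U (γ'.1 t)) K)
            - min (U (x : EuclideanSpace ℝ (Fin d))) c - min (U y') c
            + sInf (Set.range U))) ⟨K - Umin, ?_⟩ (y : EuclideanSpace ℝ (Fin d))
      rintro _ ⟨y', rfl⟩
      exact hIle _ y'
    refine hys.trans ?_
    refine le_ciSup (f := fun x' : EuclideanSpace ℝ (Fin d) =>
      ⨆ y' : EuclideanSpace ℝ (Fin d), ⨅ γ' : Curves x' y',
        ((⨆ t : Icc (0:ℝ) 1, min (U (γ'.1 t)) K) - min (U x') c - min (U y') c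
          + sInf (Set.range U))) ⟨K - Umin, ?_⟩ (x : EuclideanSpace ℝ (Fin d))
    rintro _ ⟨x', rfl⟩
    exact ciSup_le fun y' => hIle x' y'
  -- Assemble everything
  have hmul1 : (1 / ε) * (min (U (γ.1 tδ)) K - Umin) ≤ (1 / ε) * (bclip + δ - Umin) :=
    mul_le_mul_of_nonneg_left (by linarith only [stepE, stepF]) hεinv.le
  have hmul2 : (1 / f δ₁) * (U (γ.1 tδ) - min (U (γ.1 tδ)) K)
      ≤ (1 / f δ₁) * (U (σ.1 t₀) - min (U (σ.1 t₀)) K) + δ * (1 / f δ₁) := by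
    have h := mul_le_mul_of_nonneg_left stepG hfinv.le
    nlinarith
  have hmul3 : (1 / ε) * (bclip - min (U (x : EuclideanSpace ℝ (Fin d))) c
      - min (U (y : EuclideanSpace ℝ (Fin d))) c + Umin)
      ≤ (1 / ε) * clippedHeight U c δ₁ :=
    mul_le_mul_of_nonneg_left stepI hεinv.le
  have hring : (1 / ε) * (bclip + δ - Umin)
      - (1 / ε) * (min (U (x : EuclideanSpace ℝ (Fin d))) c - Umin)
      - (1 / ε) * (min (U (y : EuclideanSpace ℝ (Fin d))) c - Umin)
      = (1 / ε) * (bclip - min (U (x : EuclideanSpace ℝ (Fin d))) c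
        - min (U (y : EuclideanSpace ℝ (Fin d))) c + Umin) + δ * (1 / ε) := by
    ring
  have hdiv : (1 / ε) * clippedHeight U c δ₁ = clippedHeight U c δ₁ / ε := by ring
  calc (⨅ γ' : Curves (x : EuclideanSpace ℝ (Fin d)) (y : EuclideanSpace ℝ (Fin d)),
      ((⨆ t : Icc (0:ℝ) 1, V (γ'.1 t)) - V x - V y + sInf (Set.range V)))
      ≤ (⨆ t : Icc (0:ℝ) 1, V (γ.1 t)) - V x - V y + sInf (Set.range V) := stepA
    _ ≤ clippedHeight U c δ₁ / ε + C + η := by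
        linarith only [stepB, stepC, stepDx, stepDy, hmul1, hmul2, hmul3, stepH,
          hring, hdiv, hδη, hI0]
end

section
/- If the law of X is μ_ε (the stationary distribution of ISA), then for every sufficiently small δ ∈ (0, c − U_min) there exists a constant D₂ = D₂(δ) > 0, independent of ε, such that P(U(X) > U_min + δ) ≤ D₂ e^{−δ/(2ε)}. -/
open Real MeasureTheory Set

/-- The unnormalized density of the stationary distribution `μ_ε` of ISA:
`ρ_ε(x) = (f((U(x)−c)₊)+ε)⁻¹ exp(−∫_{U_min}^{U(x)} du/(f((u−c)₊)+ε))`. -/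
noncomputable def rhoEps {d : ℕ} (U : EuclideanSpace ℝ (Fin d) → ℝ) (f : ℝ → ℝ)
    (Umin c ε : ℝ) (x : EuclideanSpace ℝ (Fin d)) : ℝ :=
  (f (max (U x - c) 0) + ε)⁻¹ *
    Real.exp (-(∫ u in Umin..U x, (f (max (u - c) 0) + ε)⁻¹))

/-- The stationary distribution `μ_ε` of ISA, i.e. the probability measure with
density proportional to `ρ_ε` with respect to Lebesgue measure. -/
noncomputable def muEps {d : ℕ} (U : EuclideanSpace ℝ (Fin d) → ℝ) (f : ℝ → ℝ)
    (Umin c ε : ℝ) : Measure (EuclideanSpace ℝ (Fin d)) :=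
  volume.withDensity fun x =>
    ENNReal.ofReal (rhoEps U f Umin c ε x / ∫ y, rhoEps U f Umin c ε y)

lemma gauss_integrable {d : ℕ} {b : ℝ} (hb : 0 < b) :
    Integrable (fun v : EuclideanSpace ℝ (Fin d) => Real.exp (-b * ‖v‖ ^ 2)) := by
  have h := (GaussianFourier.integrable_cexp_neg_mul_sq_norm_add (V := EuclideanSpace ℝ (Fin d))
      (b := (b : ℂ)) (by simpa using hb) 0 0).norm
  refine h.congr (Filter.Eventually.of_forall fun v => ?_)
  simp [Complex.norm_exp]
  left; norm_cast

/-- Concentration of the stationary measure `μ_ε` near the global minima: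
if the law of `X` is `μ_ε`, then for every sufficiently small `δ ∈ (0, c − U_min)` there is
`D₂ = D₂(δ) > 0`, independent of `ε`, such that `P(U(X) > U_min + δ) ≤ D₂ e^{−δ/(2ε)}`. -/
theorem stmt5 {d : ℕ} (U : EuclideanSpace ℝ (Fin d) → ℝ) (f : ℝ → ℝ)
    (a₁ a₂ M M₄ Umin c : ℝ)
    (ha₁ : 0 < a₁) (ha₂ : 0 < a₂) (hM : 0 < M)
    (hU : ContDiff ℝ (⊤ : ℕ∞) U)
    (hUlb : ∀ x, a₁ * ‖x‖ ^ 2 - M ≤ U x)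
    (hUub : ∀ x, U x ≤ a₂ * ‖x‖ ^ 2 + M)
    (hUmin : IsGLB (Set.range U) Umin)
    (hfnn : ∀ s, 0 ≤ f s) (hfmono : Monotone f) (hf0 : f 0 = 0)
    (hfub : ∀ s, f s ≤ M₄)
    (hc : Umin < c) :
    ∀ δ, 0 < δ → δ < c - Umin →
      ∃ D₂ > 0, ∀ ε > (0 : ℝ),
        muEps U f Umin c ε {x | Umin + δ < U x}
          ≤ ENNReal.ofReal (D₂ * Real.exp (-δ / (2 * ε))) := by
  intro δ hδ0 hδc
  have hUc : Continuous U := hU.continuous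
  have hUmin_le : ∀ x, Umin ≤ U x := fun x => hUmin.1 ⟨x, rfl⟩
  have hM₄ : 0 ≤ M₄ := le_trans (hfnn 0) (hfub 0)
  have hδltc : Umin + δ < c := by linarith
  set S : Set (EuclideanSpace ℝ (Fin d)) := {x | Umin + δ < U x} with hS
  have hSm : MeasurableSet S := (isOpen_lt continuous_const hUc).measurableSet
  -- constants
  set b : ℝ := a₁ / (M₄ + 1) with hbdef
  have hb : 0 < b := div_pos ha₁ (by linarith)
  set K : ℝ := Real.exp ((M + Umin + δ) / (M₄ + 1)) with hKdef
  have hK : 0 < K := Real.exp_pos _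
  set G : ℝ := ∫ x : EuclideanSpace ℝ (Fin d), Real.exp (-b * ‖x‖ ^ 2) with hGdef
  have hGint : Integrable (fun v : EuclideanSpace ℝ (Fin d) => Real.exp (-b * ‖v‖ ^ 2)) :=
    gauss_integrable hb
  have hGpos : 0 < G := by
    rw [hGdef]
    rw [integral_pos_iff_support_of_nonneg (fun x => (Real.exp_pos _).le) hGint]
    have : (Function.support fun v : EuclideanSpace ℝ (Fin d) => Real.exp (-b * ‖v‖ ^ 2)) =
        univ := by
      ext x; simp [Function.mem_support, (Real.exp_pos _).ne']
    rw [this]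
    exact isOpen_univ.measure_pos volume univ_nonempty
  -- the small set A near the minimum
  set A : Set (EuclideanSpace ℝ (Fin d)) := {x | U x < Umin + δ / 2} with hA
  have hAopen : IsOpen A := isOpen_lt hUc continuous_const
  have hAne : A.Nonempty := by
    obtain ⟨y, ⟨x, rfl⟩, _, hlt⟩ := hUmin.exists_between (by linarith : Umin < Umin + δ / 2)
    exact ⟨x, hlt⟩
  have hAm : MeasurableSet A := hAopen.measurableSet
  have hAsub : A ⊆ Metric.closedBall 0 (Real.sqrt ((Umin + δ / 2 + M) / a₁)) := by
    intro x hx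
    have h1 : a₁ * ‖x‖ ^ 2 - M ≤ U x := hUlb x
    have h2 : U x < Umin + δ / 2 := hx
    have h3 : ‖x‖ ^ 2 ≤ (Umin + δ / 2 + M) / a₁ := by
      rw [le_div_iff₀ ha₁]; nlinarith
    have h4 : ‖x‖ ≤ Real.sqrt ((Umin + δ / 2 + M) / a₁) := by
      rw [← Real.sqrt_sq (norm_nonneg x)]
      exact Real.sqrt_le_sqrt h3
    simpa [Metric.mem_closedBall, dist_zero_right] using h4
  have hAfin : volume A < ⊤ :=
    lt_of_le_of_lt (measure_mono hAsub) (measure_closedBall_lt_top)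
  have hApos : 0 < volume A := hAopen.measure_pos volume hAne
  set v : ℝ := (volume A).toReal with hvdef
  have hv : 0 < v := ENNReal.toReal_pos hApos.ne' hAfin.ne
  -- the constant D₂
  refine ⟨max (K * G / v) (Real.exp (δ / 2)), lt_of_lt_of_le (Real.exp_pos _) (le_max_right _ _),
    fun ε hε => ?_⟩
  -- setup for fixed ε
  set g : ℝ → ℝ := fun u => (f (max (u - c) 0) + ε)⁻¹ with hgdef
  have hgpos : ∀ u, 0 < f (max (u - c) 0) + ε := fun u => add_pos_of_nonneg_of_pos (hfnn _) hε
  have hgpos' : ∀ u, 0 < g u := fun u => inv_pos.2 (hgpos u)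
  have hganti : Antitone g := by
    intro u w huw
    exact inv_anti₀ (hgpos u)
      (add_le_add (hfmono (max_le_max (sub_le_sub_right huw c) le_rfl)) (le_refl ε))
  have hg_le : ∀ u, g u ≤ ε⁻¹ := fun u =>
    inv_anti₀ hε (le_add_of_nonneg_left (hfnn _))
  have hg_ge : ∀ u, (M₄ + ε)⁻¹ ≤ g u := fun u =>
    inv_anti₀ (hgpos u) (add_le_add (hfub _) (le_refl ε))
  have hg_eq : ∀ u ≤ c, g u = ε⁻¹ := by
    intro u hu
    simp only [hgdef, max_eq_right (sub_nonpos.2 hu), hf0, zero_add]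
  have hgint : ∀ a b : ℝ, IntervalIntegrable g volume a b := fun a b =>
    hganti.intervalIntegrable
  -- rho and its basic form
  set rho : EuclideanSpace ℝ (Fin d) → ℝ := rhoEps U f Umin c ε with hrhodef
  have hrho_eq : ∀ x, rho x = g (U x) * Real.exp (-(∫ u in Umin..U x, g u)) := fun x => rfl
  have hrho_pos : ∀ x, 0 < rho x := fun x =>
    mul_pos (hgpos' _) (Real.exp_pos _)
  -- measurability
  have hFcont : Continuous fun t => ∫ u in Umin..t, g u :=
    intervalIntegral.continuous_primitive hgint Umin
  have hrho_meas : Measurable rho := by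
    have h1 : Measurable fun x => g (U x) := hganti.measurable.comp hUc.measurable
    have h2 : Continuous fun x => Real.exp (-(∫ u in Umin..U x, g u)) :=
      Real.continuous_exp.comp ((hFcont.comp hUc).neg)
    exact h1.mul h2.measurable
  -- bounds on the inner integral
  have hI_ub : ∀ x, (∫ u in Umin..U x, g u) ≤ (U x - Umin) * ε⁻¹ := by
    intro x
    calc (∫ u in Umin..U x, g u) ≤ ∫ u in Umin..U x, ε⁻¹ :=
          intervalIntegral.integral_mono_on (hUmin_le x) (hgint _ _)
            intervalIntegrable_const (fun u _ => hg_le u)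
      _ = (U x - Umin) * ε⁻¹ := by rw [intervalIntegral.integral_const, smul_eq_mul]
  have hI_lb : ∀ x, (U x - Umin) * (M₄ + ε)⁻¹ ≤ ∫ u in Umin..U x, g u := by
    intro x
    calc (U x - Umin) * (M₄ + ε)⁻¹ = ∫ u in Umin..U x, (M₄ + ε)⁻¹ := by
          rw [intervalIntegral.integral_const, smul_eq_mul]
      _ ≤ ∫ u in Umin..U x, g u :=
          intervalIntegral.integral_mono_on (hUmin_le x) intervalIntegrable_const
            (hgint _ _) (fun u _ => hg_ge u)
  -- integrability of rho
  have hrho_int : Integrable rho := by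
    refine Integrable.mono' (g := fun x =>
        ε⁻¹ * Real.exp ((M + Umin) * (M₄ + ε)⁻¹) *
          Real.exp (-(a₁ * (M₄ + ε)⁻¹) * ‖x‖ ^ 2)) ?_ hrho_meas.aestronglyMeasurable ?_
    · exact ((gauss_integrable (by positivity)).const_mul _)
    · refine Filter.Eventually.of_forall fun x => ?_
      rw [Real.norm_of_nonneg (hrho_pos x).le, hrho_eq]
      have h1 : g (U x) ≤ ε⁻¹ := hg_le _
      have h2 : Real.exp (-(∫ u in Umin..U x, g u)) ≤
          Real.exp ((M + Umin) * (M₄ + ε)⁻¹ + -(a₁ * (M₄ + ε)⁻¹) * ‖x‖ ^ 2) := by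
        apply Real.exp_le_exp.2
        have h3 := hI_lb x
        have h4 : a₁ * ‖x‖ ^ 2 - M ≤ U x := hUlb x
        have h5 : (0:ℝ) < (M₄ + ε)⁻¹ := by positivity
        nlinarith [hI_lb x]
      calc g (U x) * Real.exp (-(∫ u in Umin..U x, g u))
          ≤ ε⁻¹ * Real.exp ((M + Umin) * (M₄ + ε)⁻¹ + -(a₁ * (M₄ + ε)⁻¹) * ‖x‖ ^ 2) := by
            apply mul_le_mul h1 h2 (Real.exp_pos _).le (by positivity)
        _ = ε⁻¹ * Real.exp ((M + Umin) * (M₄ + ε)⁻¹) *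
              Real.exp (-(a₁ * (M₄ + ε)⁻¹) * ‖x‖ ^ 2) := by
            rw [Real.exp_add]; ring
  -- lower bound on the normalization
  set Z : ℝ := ∫ y, rho y with hZdef
  have hZ_lb : ε⁻¹ * Real.exp (-(δ / 2) * ε⁻¹) * v ≤ Z := by
    have hpt : ∀ x ∈ A, ε⁻¹ * Real.exp (-(δ / 2) * ε⁻¹) ≤ rho x := by
      intro x hx
      have hxA : U x < Umin + δ / 2 := hx
      have hgU : g (U x) = ε⁻¹ := hg_eq _ (by linarith)
      have hIle : (∫ u in Umin..U x, g u) ≤ (δ / 2) * ε⁻¹ := by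
        refine le_trans (hI_ub x) ?_
        have : U x - Umin ≤ δ / 2 := by linarith
        exact mul_le_mul_of_nonneg_right this (by positivity)
      rw [hrho_eq, hgU]
      have : Real.exp (-(δ / 2) * ε⁻¹) ≤ Real.exp (-(∫ u in Umin..U x, g u)) := by
        apply Real.exp_le_exp.2; linarith
      exact mul_le_mul_of_nonneg_left this (by positivity)
    calc ε⁻¹ * Real.exp (-(δ / 2) * ε⁻¹) * v
        = ∫ _ in A, ε⁻¹ * Real.exp (-(δ / 2) * ε⁻¹) := by
          rw [setIntegral_const, smul_eq_mul, hvdef, Measure.real]; ring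
      _ ≤ ∫ x in A, rho x := by
          refine setIntegral_mono_on (integrableOn_const hAfin.ne)
            (hrho_int.integrableOn) hAm hpt
      _ ≤ Z := setIntegral_le_integral hrho_int
            (Filter.Eventually.of_forall fun x => (hrho_pos x).le)
  have hZ_pos : 0 < Z := lt_of_lt_of_le (by positivity) hZ_lb
  -- compute the measure as a real integral
  have hmu : muEps U f Umin c ε S = ENNReal.ofReal ((∫ x in S, rho x) / Z) := by
    rw [muEps, withDensity_apply _ hSm]
    rw [← ofReal_integral_eq_lintegral_ofReal ((hrho_int.div_const Z).integrableOn)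
        (Filter.Eventually.of_forall fun x => div_nonneg (hrho_pos x).le hZ_pos.le)]
    rw [integral_div]
  rw [hmu]
  apply ENNReal.ofReal_le_ofReal
  have hNnn : 0 ≤ ∫ x in S, rho x :=
    setIntegral_nonneg hSm fun x _ => (hrho_pos x).le
  have hNleZ : (∫ x in S, rho x) ≤ Z := setIntegral_le_integral hrho_int
    (Filter.Eventually.of_forall fun x => (hrho_pos x).le)
  rcases le_or_gt ε 1 with hε1 | hε1
  · -- small ε: use the exponential bound
    -- upper bound on the numerator
    have hIlbS : ∀ x ∈ S, δ * ε⁻¹ + (U x - Umin - δ) * (M₄ + 1)⁻¹ ≤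
        ∫ u in Umin..U x, g u := by
      intro x hx
      have hxS : Umin + δ < U x := hx
      have hsplit : (∫ u in Umin..U x, g u) =
          (∫ u in Umin..Umin + δ, g u) + ∫ u in Umin + δ..U x, g u :=
        (intervalIntegral.integral_add_adjacent_intervals (hgint _ _) (hgint _ _)).symm
      have h1 : (∫ u in Umin..Umin + δ, g u) = δ * ε⁻¹ := by
        rw [intervalIntegral.integral_congr (g := fun _ => ε⁻¹) ?_]
        · rw [intervalIntegral.integral_const, smul_eq_mul]; ring_nf
        · intro u hu
          rw [Set.uIcc_of_le (by linarith : Umin ≤ Umin + δ)] at hu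
          exact hg_eq u (by linarith [hu.2])
      have h2 : (U x - (Umin + δ)) * (M₄ + ε)⁻¹ ≤ ∫ u in Umin + δ..U x, g u := by
        calc (U x - (Umin + δ)) * (M₄ + ε)⁻¹ = ∫ u in Umin + δ..U x, (M₄ + ε)⁻¹ := by
              rw [intervalIntegral.integral_const, smul_eq_mul]
          _ ≤ _ := intervalIntegral.integral_mono_on hxS.le intervalIntegrable_const
              (hgint _ _) (fun u _ => hg_ge u)
      have h3 : (U x - Umin - δ) * (M₄ + 1)⁻¹ ≤ (U x - (Umin + δ)) * (M₄ + ε)⁻¹ := by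
        have hle : (M₄ + 1)⁻¹ ≤ (M₄ + ε)⁻¹ :=
          inv_anti₀ (by positivity) (by linarith)
        have : (0:ℝ) ≤ U x - Umin - δ := by linarith
        calc (U x - Umin - δ) * (M₄ + 1)⁻¹ ≤ (U x - Umin - δ) * (M₄ + ε)⁻¹ :=
              mul_le_mul_of_nonneg_left hle this
          _ = (U x - (Umin + δ)) * (M₄ + ε)⁻¹ := by ring
      linarith [hsplit, h1, h2, h3]
    have hNub : (∫ x in S, rho x) ≤ ε⁻¹ * Real.exp (-δ * ε⁻¹) * (K * G) := by
      have hbd : ∀ x ∈ S, rho x ≤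
          ε⁻¹ * Real.exp (-δ * ε⁻¹) * (K * Real.exp (-b * ‖x‖ ^ 2)) := by
        intro x hx
        rw [hrho_eq]
        have h1 : g (U x) ≤ ε⁻¹ := hg_le _
        have h2 : Real.exp (-(∫ u in Umin..U x, g u)) ≤
            Real.exp (-δ * ε⁻¹ + ((M + Umin + δ) / (M₄ + 1) + -b * ‖x‖ ^ 2)) := by
          apply Real.exp_le_exp.2
          have h3 := hIlbS x hx
          have h4 := hUlb x
          have h5 : (0:ℝ) < (M₄ + 1)⁻¹ := by positivity
          have hbb : b = a₁ * (M₄ + 1)⁻¹ := by rw [hbdef, div_eq_mul_inv]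
          rw [hbb]
          have : (a₁ * ‖x‖ ^ 2 - M - Umin - δ) * (M₄ + 1)⁻¹ ≤
              (U x - Umin - δ) * (M₄ + 1)⁻¹ :=
            mul_le_mul_of_nonneg_right (by linarith) h5.le
          have hdiv : (M + Umin + δ) / (M₄ + 1) = (M + Umin + δ) * (M₄ + 1)⁻¹ :=
            div_eq_mul_inv _ _
          rw [hdiv]
          nlinarith
        calc g (U x) * Real.exp (-(∫ u in Umin..U x, g u))
            ≤ ε⁻¹ * Real.exp (-δ * ε⁻¹ + ((M + Umin + δ) / (M₄ + 1) + -b * ‖x‖ ^ 2)) :=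
              mul_le_mul h1 h2 (Real.exp_pos _).le (by positivity)
          _ = ε⁻¹ * Real.exp (-δ * ε⁻¹) * (K * Real.exp (-b * ‖x‖ ^ 2)) := by
              rw [Real.exp_add, Real.exp_add, hKdef]; ring
      calc (∫ x in S, rho x)
          ≤ ∫ x in S, ε⁻¹ * Real.exp (-δ * ε⁻¹) * (K * Real.exp (-b * ‖x‖ ^ 2)) :=
            setIntegral_mono_on hrho_int.integrableOn
              (((hGint.const_mul K).const_mul _).integrableOn) hSm hbd
        _ ≤ ∫ x : EuclideanSpace ℝ (Fin d),
              ε⁻¹ * Real.exp (-δ * ε⁻¹) * (K * Real.exp (-b * ‖x‖ ^ 2)) :=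
            setIntegral_le_integral ((hGint.const_mul K).const_mul _)
              (Filter.Eventually.of_forall fun x => by positivity)
        _ = ε⁻¹ * Real.exp (-δ * ε⁻¹) * (K * G) := by
            rw [MeasureTheory.integral_const_mul, MeasureTheory.integral_const_mul]
      -- done
    have hsplitexp : Real.exp (-δ * ε⁻¹) =
        Real.exp (-δ / (2 * ε)) * Real.exp (-(δ / 2) * ε⁻¹) := by
      rw [← Real.exp_add]
      congr 1
      field_simp
      ring
    have hratio : (∫ x in S, rho x) / Z ≤
        (ε⁻¹ * Real.exp (-δ * ε⁻¹) * (K * G)) / (ε⁻¹ * Real.exp (-(δ / 2) * ε⁻¹) * v) :=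
      div_le_div₀ (by positivity) hNub (by positivity) hZ_lb
    refine le_trans hratio ?_
    have hkey : (ε⁻¹ * Real.exp (-δ * ε⁻¹) * (K * G)) /
        (ε⁻¹ * Real.exp (-(δ / 2) * ε⁻¹) * v) = K * G / v * Real.exp (-δ / (2 * ε)) := by
      rw [hsplitexp]
      have hεne : ε ≠ 0 := hε.ne'
      have hvne : v ≠ 0 := hv.ne'
      have hene : Real.exp (-(δ / 2) * ε⁻¹) ≠ 0 := (Real.exp_pos _).ne'
      field_simp
    rw [hkey]
    exact mul_le_mul_of_nonneg_right (le_max_left _ _) (Real.exp_pos _).le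
  · -- large ε: probability is at most 1
    have h1 : (∫ x in S, rho x) / Z ≤ 1 := (div_le_one hZ_pos).2 hNleZ
    refine le_trans h1 ?_
    have h2 : (1:ℝ) ≤ Real.exp (δ / 2) * Real.exp (-δ / (2 * ε)) := by
      rw [← Real.exp_add]
      rw [show (1:ℝ) = Real.exp 0 by simp]
      apply Real.exp_le_exp.2
      rw [neg_div]
      have : δ / (2 * ε) ≤ δ / 2 :=
        div_le_div_of_nonneg_left hδ0.le (by norm_num) (by linarith)
      linarith
    calc (1:ℝ) ≤ Real.exp (δ / 2) * Real.exp (-δ / (2 * ε)) := h2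
      _ ≤ max (K * G / v) (Real.exp (δ / 2)) * Real.exp (-δ / (2 * ε)) :=
          mul_le_mul_of_nonneg_right (le_max_right _ _) (Real.exp_pos _).le
end

section
/- Under the dissipativity assumption −∇U(x)·x ≤ −r‖x‖² + M, the gradient of the modified potential satisfies ∇_x H_ε(x)·x ≥ (r/(M₄+ε₀))‖x‖² − (M₅+1)M/ε for all x, where M₄ bounds f and M₅ bounds f′ on [0, M₃]. -/
/-! The factor `(1 + f′(s)) / (f(s) + ε)` multiplying `∇U(x)·x` lies between `1/(M₄+ε₀)` and
`(M₅+1)/ε`. Where `∇U(x)·x ≥ 0` the lower bound applies, where it is negative the upper one;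
in both cases dissipativity `∇U(x)·x ≥ r‖x‖² − M` then gives the claim. -/

lemma one_add_div_add_mem_Icc {D F M₄ M₅ ε ε₀ : ℝ} (hD : 0 ≤ D) (hDM : D ≤ M₅)
    (hF : 0 ≤ F) (hFM : F ≤ M₄) (hε : 0 < ε) (hεε₀ : ε ≤ ε₀) :
    (1 + D) / (F + ε) ∈ Set.Icc (1 / (M₄ + ε₀)) ((M₅ + 1) / ε) :=
  ⟨div_le_div₀ (by linarith) (by linarith) (by linarith) (by linarith),
    div_le_div₀ (by linarith) (by linarith) hε (by linarith)⟩

lemma sub_le_mul_of_mem_Icc {κ lo hi a b g : ℝ} (hκ : κ ∈ Set.Icc lo hi) (hlo : 0 ≤ lo)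
    (ha : 0 ≤ a) (hb : 0 ≤ b) (hg : a - b ≤ g) :
    lo * a - hi * b ≤ κ * g := by
  obtain ⟨hloκ, hκhi⟩ := hκ
  rcases le_or_gt 0 g with hg0 | hg0
  · calc lo * a - hi * b ≤ lo * (a - b) := by nlinarith
      _ ≤ lo * g := mul_le_mul_of_nonneg_left hg hlo
      _ ≤ κ * g := mul_le_mul_of_nonneg_right hloκ hg0
  · calc lo * a - hi * b ≤ hi * (a - b) := by nlinarith
      _ ≤ hi * g := mul_le_mul_of_nonneg_left hg (by linarith)
      _ ≤ κ * g := mul_le_mul_of_nonpos_right hκhi hg0.le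

theorem stmt9_general {d : ℕ} (U : EuclideanSpace ℝ (Fin d) → ℝ) (f : ℝ → ℝ)
    (r M M₃ M₄ M₅ c ε ε₀ : ℝ)
    (hr : 0 < r) (hM : 0 < M) (hM₅ : 0 ≤ M₅)
    (hdiss : ∀ x, r * ‖x‖ ^ 2 - M ≤ (inner ℝ (gradient U x) x : ℝ))
    (hfmono : Monotone f) (hfnn : ∀ s, 0 ≤ f s)
    (hfub : ∀ s, f s ≤ M₄)
    (hf' : ∀ s ∈ Set.Icc (0 : ℝ) M₃, deriv f s ≤ M₅)
    (hf'M₃ : ∀ s, M₃ ≤ s → deriv f s = 0)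
    (hε : 0 < ε) (hεε₀ : ε ≤ ε₀) :
    ∀ x,
      (r / (M₄ + ε₀)) * ‖x‖ ^ 2 - (M₅ + 1) * M / ε
        ≤ ((1 + deriv f (max (U x - c) 0)) / (f (max (U x - c) 0) + ε))
            * (inner ℝ (gradient U x) x : ℝ) := by
  intro x
  set s := max (U x - c) 0
  have hDM : deriv f s ≤ M₅ := by
    rcases le_or_gt s M₃ with h | h
    · exact hf' s ⟨le_max_right _ _, h⟩
    · exact (hf'M₃ s h.le).trans_le hM₅
  have hκ := one_add_div_add_mem_Icc hfmono.deriv_nonneg hDM (hfnn s) (hfub s) hε hεε₀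
  have hlo : 0 ≤ 1 / (M₄ + ε₀) := one_div_nonneg.mpr (by linarith [(hfnn 0).trans (hfub 0)])
  convert sub_le_mul_of_mem_Icc hκ hlo (by positivity) hM.le (hdiss x) using 1
  ring

/-- Lower bound on `∇_x H_ε(x)·x` under the dissipativity assumption on `U`:
`∇_x H_ε(x)·x = [(1 + f′((U(x)−c)₊))/(f((U(x)−c)₊)+ε)] ∇U(x)·x
  ≥ (r/(M₄+ε₀))‖x‖² − (M₅+1)M/ε`. -/
theorem stmt9 {d : ℕ} (U : EuclideanSpace ℝ (Fin d) → ℝ) (f : ℝ → ℝ)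
    (r M M₃ M₄ M₅ c ε ε₀ : ℝ)
    (hr : 0 < r) (hM : 0 < M) (hM₃ : 0 < M₃) (hM₄ : 0 < M₄) (hM₅ : 0 ≤ M₅)
    (hU : ContDiff ℝ 1 U)
    (hdiss : ∀ x, r * ‖x‖ ^ 2 - M ≤ (inner ℝ (gradient U x) x : ℝ))
    (hf : ContDiff ℝ 1 f) (hfmono : Monotone f) (hfnn : ∀ s, 0 ≤ f s)
    (hfub : ∀ s, f s ≤ M₄)
    (hf0 : f 0 = 0) (hf'0 : deriv f 0 = 0)
    (hf' : ∀ s ∈ Set.Icc (0 : ℝ) M₃, deriv f s ≤ M₅)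
    (hfM₃ : ∀ s, M₃ ≤ s → f s = M₄)
    (hf'M₃ : ∀ s, M₃ ≤ s → deriv f s = 0)
    (hε : 0 < ε) (hεε₀ : ε ≤ ε₀) :
    ∀ x,
      (r / (M₄ + ε₀)) * ‖x‖ ^ 2 - (M₅ + 1) * M / ε
        ≤ ((1 + deriv f (max (U x - c) 0)) / (f (max (U x - c) 0) + ε))
            * (inner ℝ (gradient U x) x : ℝ) :=
  stmt9_general U f r M M₃ M₄ M₅ c ε ε₀ hr hM hM₅ hdiss hfmono hfnn hfub hf' hf'M₃ hε hεε₀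
end
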